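/- Let C_1, ..., C_t be pairwise disjoint finite subsets of K, each with at least two elements, and let A = {f ∈ K[x] : f is constant on each C_i, i.e. f(β) = f(γ) for all β, γ ∈ C_i and all i}. Then: (1) for every i and every α ∈ C_i, every α-derivation D of A has the form D(f) = Σ_{β ∈ C_i} c_β · f'(β) for some constants c_β ∈ K; (2) for every α ∈ K not belonging to C_1 ∪ ⋯ ∪ C_t, every α-derivation D of A has the form D(f) = c·f'(α) for some constant c ∈ K. -/

import Mathlib

/-! An `α`-derivation `D` kills the constants and every product of two elements of `A` vanishing
at `α`. Let `α` lie in the cluster `C i`, with nodal polynomial `Q`, and let `w` interpolate the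
indicator function of `C i` on the clusters. Every `g = Q² h` in `A` is then such a sum of
products, `g = (1 - w²) g + (Q w) (Q w h)`. If `f ∈ A` has `f' = 0` on `C i`, then `f - f(α)`
vanishes doubly on `C i`, so `D f = 0`: the form `D` vanishes on the common kernel of the forms
`f ↦ f'(β)`, `β ∈ C i`, and is therefore a linear combination of them. A point outside all
clusters is an extra singleton cluster, which does not change `A`. -/

open Polynomial

/-- `D` is an `α`-derivation of the subalgebra `A` of `K[x]`. -/
def IsAlphaDerivation {K : Type*} [Field K] (A : Subalgebra K (Polynomial K)) (α : K)
    (D : A →ₗ[K] K) : Prop :=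
  ∀ f g : A, D (f * g) = D f * (g : Polynomial K).eval α + (f : Polynomial K).eval α * D g

open Function

theorem exists_eq_sum_of_forall_eq_zero {K ι E : Type*} [Field K] [AddCommGroup E] [Module K E]
    {s : Finset ι} {L : ι → E →ₗ[K] K} {φ : E →ₗ[K] K}
    (h : ∀ x, (∀ i ∈ s, L i x = 0) → φ x = 0) :
    ∃ c : ι → K, ∀ x, φ x = ∑ i ∈ s, c i * L i x := by
  classical
  have hker : ⨅ i : s, LinearMap.ker (L i) ≤ LinearMap.ker φ := fun x hx => by
    simp only [Submodule.mem_iInf, LinearMap.mem_ker, Subtype.forall] at hx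
    exact h x hx
  obtain ⟨c, hc⟩ :=
    (Submodule.mem_span_range_iff_exists_fun K).1 (mem_span_of_iInf_ker_le_ker hker)
  refine ⟨fun i => if hi : i ∈ s then c ⟨i, hi⟩ else 0, fun x => ?_⟩
  rw [← hc, ← Finset.sum_coe_sort s]
  simp

theorem Lagrange.nodal_sq_dvd {K : Type*} [Field K] {s : Finset K} {p : K[X]}
    (h : ∀ γ ∈ s, p.IsRoot γ ∧ (derivative p).IsRoot γ) : Lagrange.nodal s id ^ 2 ∣ p := by
  rcases eq_or_ne p 0 with rfl | hp
  · exact dvd_zero _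
  rw [Lagrange.nodal, ← Finset.prod_pow]
  refine Finset.prod_dvd_of_coprime
    (fun a _ b _ hab => (pairwise_coprime_X_sub_C injective_id hab).pow) fun γ hγ => ?_
  exact (le_rootMultiplicity_iff hp).1 ((one_lt_rootMultiplicity_iff_isRoot hp).2 (h γ hγ))

def IsClusterAlgebra {K ι : Type*} [Field K] (A : Subalgebra K K[X]) (C : ι → Finset K) : Prop :=
  ∀ f : K[X], f ∈ A ↔ ∀ i, ∀ β ∈ C i, ∀ γ ∈ C i, f.eval β = f.eval γ

namespace IsAlphaDerivation

variable {K : Type*} [Field K] {A : Subalgebra K K[X]} {α : K} {D : A →ₗ[K] K}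

theorem map_algebraMap (hD : IsAlphaDerivation A α D) (c : K) : D (algebraMap K A c) = 0 := by
  have h1 : D 1 = 0 := by simpa using hD 1 1
  rw [Algebra.algebraMap_eq_smul_one, map_smul, h1, smul_zero]

theorem map_mul_eq_zero (hD : IsAlphaDerivation A α D) {f g : A}
    (hf : (f : K[X]).eval α = 0) (hg : (g : K[X]).eval α = 0) : D (f * g) = 0 := by
  rw [hD, hf, hg, mul_zero, zero_mul, add_zero]

variable {ι : Type*} [Fintype ι] {C : ι → Finset K}

theorem map_eq_zero_of_sq_nodal_dvd
    (hA : IsClusterAlgebra A C) (hdisj : Pairwise (Disjoint on C))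
    (hD : IsAlphaDerivation A α D) {i : ι} (hα : α ∈ C i)
    (g : A) (hg : Lagrange.nodal (C i) id ^ 2 ∣ (g : K[X])) : D g = 0 := by
  classical
  obtain ⟨h, hgh⟩ := hg
  set Q := Lagrange.nodal (C i) id
  have hQ : ∀ γ ∈ C i, Q.eval γ = 0 := fun γ hγ => by
    rw [Lagrange.eval_nodal]; exact Finset.prod_eq_zero hγ (sub_self γ)
  obtain ⟨w, hw⟩ : ∃ w : K[X], ∀ j, ∀ γ ∈ C j, w.eval γ = if j = i then 1 else 0 := by
    refine ⟨Lagrange.interpolate (Finset.univ.biUnion C) id (fun γ => if γ ∈ C i then 1 else 0),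
      fun j γ hγ => ?_⟩
    rw [← id_eq γ, Lagrange.eval_interpolate_at_node _ (Set.injOn_id _)
      (Finset.mem_biUnion.2 ⟨j, Finset.mem_univ j, hγ⟩)]
    rcases eq_or_ne j i with rfl | hji
    · simp [hγ]
    · simp [hji, Finset.disjoint_left.1 (hdisj hji) hγ]
  have mem_of_vanish : ∀ f : K[X], (∀ j, ∀ γ ∈ C j, f.eval γ = 0) → f ∈ A := fun f hf =>
    (hA f).2 fun j β hβ γ hγ => by rw [hf j β hβ, hf j γ hγ]
  have hQw : ∀ j, ∀ γ ∈ C j, (Q * w).eval γ = 0 := fun j γ hγ => by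
    rcases eq_or_ne j i with rfl | hji
    · rw [eval_mul, hQ γ hγ, zero_mul]
    · rw [eval_mul, hw j γ hγ, if_neg hji, mul_zero]
  let u : A := ⟨1 - w ^ 2, (hA _).2 fun j β hβ γ hγ => by simp [hw j β hβ, hw j γ hγ]⟩
  let v : A := ⟨Q * w, mem_of_vanish _ hQw⟩
  let v' : A := ⟨Q * w * h, mem_of_vanish _ fun j γ hγ => by rw [eval_mul, hQw j γ hγ, zero_mul]⟩
  have hdecomp : g = u * g + v * v' := Subtype.ext (by simp [u, v, v', hgh]; ring)
  rw [hdecomp, map_add, hD.map_mul_eq_zero (by simp [u, hw i α hα]) (by simp [hgh, hQ α hα]),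
    hD.map_mul_eq_zero (by simp [v, hQ α hα]) (by simp [v', hQ α hα]), add_zero]

theorem map_eq_zero_of_derivative_eval_eq_zero
    (hA : IsClusterAlgebra A C) (hdisj : Pairwise (Disjoint on C))
    (hD : IsAlphaDerivation A α D) {i : ι} (hα : α ∈ C i)
    (f : A) (hf : ∀ β ∈ C i, (derivative (f : K[X])).eval β = 0) : D f = 0 := by
  have hsq : Lagrange.nodal (C i) id ^ 2 ∣ ((f - algebraMap K A ((f : K[X]).eval α) : A) : K[X]) :=
    Lagrange.nodal_sq_dvd fun β hβ => by
      simp [(hA f).1 f.2 i β hβ α hα, hf β hβ]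
  simpa [hD.map_algebraMap] using hD.map_eq_zero_of_sq_nodal_dvd hA hdisj hα _ hsq

theorem exists_eq_sum_derivative
    (hA : IsClusterAlgebra A C) (hdisj : Pairwise (Disjoint on C))
    (hD : IsAlphaDerivation A α D) {i : ι} (hα : α ∈ C i) :
    ∃ c : K → K, ∀ f : A, D f = ∑ β ∈ C i, c β * (derivative (f : K[X])).eval β :=
  exists_eq_sum_of_forall_eq_zero (L := fun β => leval β ∘ₗ derivative ∘ₗ A.val.toLinearMap)
    fun f hf => hD.map_eq_zero_of_derivative_eval_eq_zero hA hdisj hα f (by simpa using hf)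

end IsAlphaDerivation

theorem derivations_of_cluster_algebra_general
    {K : Type*} [Field K]
    (t : ℕ) (C : Fin t → Finset K)
    (hdisj : ∀ i j, i ≠ j → Disjoint (C i) (C j))
    (A : Subalgebra K (Polynomial K))
    (hA : ∀ f : Polynomial K, f ∈ A ↔
      ∀ i : Fin t, ∀ β ∈ C i, ∀ γ ∈ C i, f.eval β = f.eval γ) :
    (∀ i : Fin t, ∀ α ∈ C i, ∀ D : A →ₗ[K] K, IsAlphaDerivation A α D →
      ∃ c : K → K, ∀ f : A,
        D f = ∑ β ∈ C i, c β * (Polynomial.derivative (f : Polynomial K)).eval β) ∧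
    (∀ α : K, (∀ i : Fin t, α ∉ C i) → ∀ D : A →ₗ[K] K, IsAlphaDerivation A α D →
      ∃ c : K, ∀ f : A,
        D f = c * (Polynomial.derivative (f : Polynomial K)).eval α) := by
  refine ⟨fun i α hα D hD => hD.exists_eq_sum_derivative hA (fun i j => hdisj i j) hα,
    fun α hα D hD => ?_⟩
  let C' : Option (Fin t) → Finset K := fun o => o.elim {α} C
  have hA' : IsClusterAlgebra A C' := fun f => by simp [C', Option.forall, hA]
  have hdisj' : Pairwise (Disjoint on C') := by
    rintro (_ | i) (_ | j) hij
    · exact absurd rfl hij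
    · simpa [C', onFun] using hα j
    · simpa [C', onFun] using hα i
    · exact hdisj i j (by simpa using hij)
  obtain ⟨c, hc⟩ := hD.exists_eq_sum_derivative hA' hdisj' (i := none) (Finset.mem_singleton_self α)
  exact ⟨c α, fun f => by simpa [C'] using hc f⟩

theorem derivations_of_cluster_algebra
    {K : Type*} [Field K] [IsAlgClosed K] [CharZero K]
    (t : ℕ) (C : Fin t → Finset K)
    (hcard : ∀ i, 2 ≤ (C i).card)
    (hdisj : ∀ i j, i ≠ j → Disjoint (C i) (C j))
    (A : Subalgebra K (Polynomial K))
    (hA : ∀ f : Polynomial K, f ∈ A ↔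
      ∀ i : Fin t, ∀ β ∈ C i, ∀ γ ∈ C i, f.eval β = f.eval γ) :
    (∀ i : Fin t, ∀ α ∈ C i, ∀ D : A →ₗ[K] K, IsAlphaDerivation A α D →
      ∃ c : K → K, ∀ f : A,
        D f = ∑ β ∈ C i, c β * (Polynomial.derivative (f : Polynomial K)).eval β) ∧
    (∀ α : K, (∀ i : Fin t, α ∉ C i) → ∀ D : A →ₗ[K] K, IsAlphaDerivation A α D →
      ∃ c : K, ∀ f : A,
        D f = c * (Polynomial.derivative (f : Polynomial K)).eval α) :=
  derivations_of_cluster_algebra_general t C hdisj A hA
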